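/- Let G be a finite abelian group, H ≤ G a subgroup such that G/H is cyclic of order n generated by the image of an element g ∈ G. Let χ : H → ℂˣ be a character of H. Then, in the polynomial ring ℂ[T], ∏_{ψ} (1 - ψ(g)·T) = 1 - χ(g^n)·T^n, where the product runs over all characters ψ of G whose restriction to H equals χ. -/

import Mathlib

/-!
An extension `ψ` of `χ` is determined by `ψ g`, since `G` is generated by `H` and `g`;
and `ψ g` can be any `n`-th root `z` of `c = χ (gⁿ)`, because the character
`(h, k) ↦ χ h * zᵏ` of `H × ℤ` kills the kernel of `(h, k) ↦ h * gᵏ`. So the product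
runs over the `n` distinct `n`-th roots `w` of `c`, and reversing the factorization
`Xⁿ - c = ∏ (X - w)` gives `∏ (1 - w X) = 1 - c Xⁿ`.
-/

open Polynomial

namespace Polynomial

theorem reverse_one {R : Type*} [Semiring R] : (1 : R[X]).reverse = 1 := by
  simpa using reverse_C (1 : R)

theorem reverse_prod {R ι : Type*} [CommSemiring R] [NoZeroDivisors R] (s : Finset ι)
    (f : ι → R[X]) : (∏ i ∈ s, f i).reverse = ∏ i ∈ s, (f i).reverse := by
  classical
  induction s using Finset.induction_on with
  | empty => exact reverse_one
  | insert a s ha ih =>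
    rw [Finset.prod_insert ha, Finset.prod_insert ha, reverse_mul_of_domain, ih]

theorem reverse_X_pow_sub_C {R : Type*} [CommRing R] (n : ℕ) (c : R) :
    (X ^ n - C c).reverse = 1 - C c * X ^ n := by
  nontriviality R
  rw [sub_eq_add_neg, ← C_neg, reverse_add_C, natDegree_X_pow]
  have hX : (X ^ n : R[X]).reverse = 1 := by
    simpa only [one_mul, reverse_one] using reverse_mul_X_pow (1 : R[X]) n
  rw [hX, C_neg, neg_mul, ← sub_eq_add_neg]

theorem prod_nthRootsFinset_X_sub_C {K : Type*} [Field K] [IsAlgClosed K] {n : ℕ}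
    (hn : (n : K) ≠ 0) {c : K} (hc : c ≠ 0) :
    ∏ w ∈ nthRootsFinset n c, (X - C w) = X ^ n - C c := by
  classical
  have hnodup : (nthRoots n c).Nodup := nodup_roots (separable_X_pow_sub_C c hn hc)
  rw [nthRootsFinset_def, Finset.prod_eq_multiset_prod, Multiset.toFinset_val, hnodup.dedup]
  exact ((IsAlgClosed.splits _).eq_prod_roots_of_monic
    (monic_X_pow_sub_C c (by rintro rfl; simp at hn))).symm

theorem prod_nthRootsFinset_one_sub_C_mul_X {K : Type*} [Field K] [IsAlgClosed K] {n : ℕ}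
    (hn : (n : K) ≠ 0) {c : K} (hc : c ≠ 0) :
    ∏ w ∈ nthRootsFinset n c, (1 - C w * X) = 1 - C c * X ^ n := by
  have hlin (w : K) : (X - C w).reverse = 1 - C w * X := by
    simpa only [pow_one] using reverse_X_pow_sub_C 1 w
  simpa only [reverse_prod, hlin, reverse_X_pow_sub_C]
    using congrArg reverse (prod_nthRootsFinset_X_sub_C hn hc)

end Polynomial

section Extension

variable {G M : Type*} [CommGroup G] [CommGroup M] {H : Subgroup G} {g : G} {n : ℕ}

theorem zpow_mem_iff_dvd_of_orderOf_mk_eq (hn : orderOf (g : G ⧸ H) = n) {k : ℤ} :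
    g ^ k ∈ H ↔ (n : ℤ) ∣ k := by
  rw [← hn, orderOf_dvd_iff_zpow_eq_one, ← QuotientGroup.mk_zpow, QuotientGroup.eq_one_iff]

theorem exists_mem_mul_zpow_eq (hgen : ∀ x : G ⧸ H, x ∈ Subgroup.zpowers (g : G ⧸ H))
    (x : G) : ∃ h ∈ H, ∃ k : ℤ, h * g ^ k = x := by
  obtain ⟨k, hk⟩ := Subgroup.mem_zpowers_iff.mp (hgen x)
  rw [← QuotientGroup.mk_zpow, QuotientGroup.eq] at hk
  exact ⟨_, hk, k, inv_mul_cancel_comm _ _⟩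

theorem MonoidHom.apply_zpow_mem_eq_zpow (hn : orderOf (g : G ⧸ H) = n) (hgn : g ^ n ∈ H)
    {χ : H →* M} {z : M} (hz : z ^ n = χ ⟨g ^ n, hgn⟩) {k : ℤ} (hk : g ^ k ∈ H) :
    χ ⟨g ^ k, hk⟩ = z ^ k := by
  obtain ⟨m, rfl⟩ := (zpow_mem_iff_dvd_of_orderOf_mk_eq hn).mp hk
  have hpow : (⟨g ^ ((n : ℤ) * m), hk⟩ : H) = ⟨g ^ n, hgn⟩ ^ m := by
    ext
    simp [zpow_mul]
  rw [hpow, map_zpow, ← hz, zpow_mul, zpow_natCast]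

theorem MonoidHom.eq_of_comp_subtype_eq_of_apply_eq
    (hgen : ∀ x : G ⧸ H, x ∈ Subgroup.zpowers (g : G ⧸ H)) {ψ₁ ψ₂ : G →* M}
    (hH : ψ₁.comp H.subtype = ψ₂.comp H.subtype) (hg : ψ₁ g = ψ₂ g) : ψ₁ = ψ₂ := by
  ext x
  obtain ⟨h, hh, k, rfl⟩ := exists_mem_mul_zpow_eq hgen x
  have hψh : ψ₁ h = ψ₂ h := DFunLike.congr_fun hH ⟨h, hh⟩
  simp only [map_mul, map_zpow, hψh, hg]

theorem MonoidHom.exists_comp_subtype_eq_and_apply_eq (hn : orderOf (g : G ⧸ H) = n)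
    (hgen : ∀ x : G ⧸ H, x ∈ Subgroup.zpowers (g : G ⧸ H)) (hgn : g ^ n ∈ H)
    (χ : H →* M) {z : M} (hz : z ^ n = χ ⟨g ^ n, hgn⟩) :
    ∃ ψ : G →* M, ψ.comp H.subtype = χ ∧ ψ g = z := by
  set f : H × Multiplicative ℤ →* G := H.subtype.coprod (zpowersHom G g)
  have hf : Function.Surjective f := by
    intro x
    obtain ⟨h, hh, k, rfl⟩ := exists_mem_mul_zpow_eq hgen x
    exact ⟨(⟨h, hh⟩, .ofAdd k), rfl⟩
  set φ : H × Multiplicative ℤ →* M := χ.coprod (zpowersHom M z)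
  have hker : f.ker ≤ φ.ker := by
    rintro ⟨h, k⟩ hhk
    have hgk : g ^ k.toAdd = (h : G)⁻¹ := eq_inv_of_mul_eq_one_right hhk
    have hgkH : g ^ k.toAdd ∈ H := hgk ▸ H.inv_mem h.2
    have hh : h = (⟨g ^ k.toAdd, hgkH⟩ : H)⁻¹ := by ext; simp [hgk]
    simp [φ, hh, MonoidHom.apply_zpow_mem_eq_zpow hn hgn hz hgkH]
  set ψ := f.liftOfRightInverse _ (Function.rightInverse_surjInv hf) ⟨φ, hker⟩
  have hψ (y) : ψ (f y) = φ y := f.liftOfRightInverse_comp_apply _ _ _ y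
  refine ⟨ψ, ?_, ?_⟩
  · ext h
    simpa [f, φ] using hψ (h, 1)
  · simpa [f, φ] using hψ (1, .ofAdd 1)

theorem MonoidHom.image_apply_setOf_comp_subtype_eq (hn : orderOf (g : G ⧸ H) = n)
    (hgen : ∀ x : G ⧸ H, x ∈ Subgroup.zpowers (g : G ⧸ H)) (hgn : g ^ n ∈ H)
    (χ : H →* M) :
    (fun ψ : G →* M ↦ ψ g) '' {ψ | ψ.comp H.subtype = χ}
      = {z | z ^ n = χ ⟨g ^ n, hgn⟩} := by
  ext z
  refine ⟨?_, fun hz ↦ exists_comp_subtype_eq_and_apply_eq hn hgen hgn χ hz⟩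
  rintro ⟨ψ, hψ, rfl⟩
  exact (map_pow ψ g n).symm.trans (DFunLike.congr_fun hψ ⟨g ^ n, hgn⟩)

end Extension

theorem Units.val_image_setOf_pow_eq {K : Type*} [GroupWithZero K] {n : ℕ} (hn : n ≠ 0)
    (c : Kˣ) : Units.val '' {z : Kˣ | z ^ n = c} = {w : K | w ^ n = c} := by
  ext w
  constructor
  · rintro ⟨z, hz, rfl⟩
    exact congrArg Units.val hz
  · intro hw
    have hw0 : w ≠ 0 := by
      rintro rfl
      exact c.ne_zero (by simpa [zero_pow hn] using hw.symm)
    exact ⟨Units.mk0 w hw0, Units.ext hw, rfl⟩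

theorem stmt_3 {G : Type*} [CommGroup G] [Fintype G] (H : Subgroup G) (g : G) (n : ℕ)
    (hn : orderOf (QuotientGroup.mk g : G ⧸ H) = n)
    (hgen : ∀ x : G ⧸ H, x ∈ Subgroup.zpowers (QuotientGroup.mk g : G ⧸ H))
    (hgn : g ^ n ∈ H) (χ : H →* ℂˣ) :
    (∏ᶠ (ψ : G →* ℂˣ) (_ : ψ.comp H.subtype = χ),
        (1 - Polynomial.C ((ψ g : ℂˣ) : ℂ) * Polynomial.X))
      = 1 - Polynomial.C ((χ ⟨g ^ n, hgn⟩ : ℂˣ) : ℂ) * Polynomial.X ^ n := by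
  have hn0 : n ≠ 0 := hn ▸ (orderOf_pos _).ne'
  set c : ℂˣ := χ ⟨g ^ n, hgn⟩
  have hinj : Set.InjOn (fun ψ : G →* ℂˣ ↦ (ψ g : ℂ)) {ψ | ψ.comp H.subtype = χ} :=
    fun ψ₁ h₁ ψ₂ h₂ h ↦ MonoidHom.eq_of_comp_subtype_eq_of_apply_eq hgen (h₁.trans h₂.symm)
      (Units.ext h)
  have himage : (fun ψ : G →* ℂˣ ↦ (ψ g : ℂ)) '' {ψ | ψ.comp H.subtype = χ}
      = nthRootsFinset n (c : ℂ) := by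
    rw [← Set.image_image, MonoidHom.image_apply_setOf_comp_subtype_eq hn hgen hgn,
      Units.val_image_setOf_pow_eq hn0]
    ext w
    exact (mem_nthRootsFinset (Nat.pos_of_ne_zero hn0) _).symm
  calc (∏ᶠ (ψ : G →* ℂˣ) (_ : ψ.comp H.subtype = χ), (1 - C ((ψ g : ℂˣ) : ℂ) * X))
      = ∏ᶠ w ∈ (nthRootsFinset n (c : ℂ) : Set ℂ), (1 - C w * X) := by
        rw [← himage, finprod_mem_image hinj]
        rfl
    _ = 1 - C (c : ℂ) * X ^ n := by
        rw [finprod_mem_coe_finset,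
          prod_nthRootsFinset_one_sub_C_mul_X (Nat.cast_ne_zero.mpr hn0) c.ne_zero]
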